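/- arXiv:2509.10686 — 6 statements merged into one kernel-verified Lean document; each statement's English description precedes it below -/
import Mathlib

section
/- Let (X,d) be a metric space and x_1,...,x_n, y_1,...,y_n points in X. Then the Arens–Eells (transportation cost) norm of the signed measure \sum_i \delta_{x_i} - \sum_i \delta_{y_i} equals \sum_{i=1}^n d(x_i, y_{\sigma(i)}) for some permutation \sigma of {1,...,n}. -/
set_option linter.unusedSectionVars false
set_option maxHeartbeats 1000000

open Finsupp

noncomputable section

namespace AEaux

variable {X : Type*} [MetricSpace X] {ι : Type*} [Fintype ι] [DecidableEq ι] [Inhabited ι]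

/-- Sum of `dist (x a) (y' b)` over consecutive pairs `(a, b)` of the list. -/
def pairSum (x y' : ι → X) (l : List ι) : ℝ :=
  (List.zipWith (fun a b => dist (x a) (y' b)) l l.tail).sum

def diagSum (x y' : ι → X) (l : List ι) : ℝ :=
  (l.map fun i => dist (x i) (y' i)).sum

def chainB (x y' : ι → X) (l : List ι) : ℝ := pairSum x y' l - diagSum x y' l

def chainV (x y' : ι → X) (z : X) (l : List ι) : ℝ :=
  chainB x y' l + dist z (y' l.headI)

theorem headI_eq_head (L : List ι) (hc : L ≠ []) : L.headI = L.head hc := by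
  cases L with
  | nil => exact absurd rfl hc
  | cons a t => rfl

variable (x y' : ι → X)

theorem pairSum_singleton (i : ι) : pairSum x y' [i] = 0 := rfl

theorem pairSum_cons (i : ι) (l : List ι) (hl : l ≠ []) :
    pairSum x y' (i :: l) = dist (x i) (y' l.headI) + pairSum x y' l := by
  cases l with
  | nil => exact absurd rfl hl
  | cons a t => simp [pairSum]

theorem diagSum_cons (i : ι) (l : List ι) :
    diagSum x y' (i :: l) = dist (x i) (y' i) + diagSum x y' l := by
  simp [diagSum]

theorem diagSum_append (u v : List ι) :
    diagSum x y' (u ++ v) = diagSum x y' u + diagSum x y' v := by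
  simp [diagSum]

theorem chainV_cons (z : X) (i : ι) (l : List ι) (hl : l ≠ []) :
    chainV x y' z (i :: l) =
      chainV x y' (x i) l + dist z (y' i) - dist (x i) (y' i) := by
  simp only [chainV, chainB, pairSum_cons x y' i l hl, diagSum_cons, List.headI_cons]
  ring

theorem chainV_le (z w : X) (l : List ι) :
    chainV x y' z l ≤ chainV x y' w l + dist z w := by
  simp only [chainV]
  have h := dist_triangle z w (y' l.headI)
  linarith

theorem pairSum_append (u v : List ι) (hu : u ≠ []) (hv : v ≠ []) :
    pairSum x y' (u ++ v) =
      pairSum x y' u + dist (x (u.getLast hu)) (y' v.headI) + pairSum x y' v := by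
  induction u with
  | nil => exact absurd rfl hu
  | cons a u ih =>
    cases u with
    | nil =>
      simp only [List.nil_append, List.singleton_append, List.getLast_singleton]
      rw [pairSum_cons x y' a v hv, pairSum_singleton]
      ring
    | cons b u =>
      have hbu : (b :: u : List ι) ≠ [] := by simp
      have h1 : ((b :: u) ++ v : List ι) ≠ [] := by simp
      rw [List.cons_append, pairSum_cons x y' a _ h1,
        pairSum_cons x y' a (b :: u) hbu, ih hbu]
      have h2 : ((b :: u) ++ v).headI = b := rfl
      have h3 : (a :: b :: u).getLast (by simp) = (b :: u).getLast hbu :=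
        List.getLast_cons hbu
      rw [h2, h3]
      simp only [List.headI_cons]
      ring

theorem cycle_list_eq (L : List ι) (hc : L ≠ []) (hnd : L.Nodup) :
    (L.map fun t => dist (x t) (y' (L.formPerm t))) =
      List.zipWith (fun a b => dist (x a) (y' b)) (L ++ [L.headI]) (L ++ [L.headI]).tail := by
  have hlen : 0 < L.length := List.length_pos_iff.mpr hc
  apply List.ext_getElem
  · simp [List.tail_append_of_ne_nil hc]
    omega
  · intro j h1 h2
    have hjc : j < L.length := by simpa using h1
    rw [List.getElem_map, List.getElem_zipWith,
      List.getElem_append_left hjc, List.formPerm_apply_getElem L hnd j hjc]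
    congr 1
    have h2' : j < (L ++ [L.headI]).tail.length := by simpa using h2
    have e2 : (L ++ [L.headI]).tail[j]'h2' = (L ++ [L.headI])[j+1]'(by simp; omega) :=
      List.getElem_tail _
    rcases Nat.lt_or_ge (j+1) L.length with h | h
    · have r1 : (L ++ [L.headI]).tail[j]'h2' = L[j + 1] :=
        e2.trans (List.getElem_append_left h)
      rw [r1]
      exact congrArg y' (getElem_congr_idx (Nat.mod_eq_of_lt h))
    · have hj1 : j + 1 = L.length := by omega
      have r1 : (L ++ [L.headI]).tail[j]'h2' = L.headI :=
        e2.trans (List.getElem_concat_length hj1 _)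
      rw [r1, headI_eq_head L hc, List.head_eq_getElem]
      exact congrArg y' (getElem_congr_idx (by rw [hj1, Nat.mod_self]))

theorem cycle_ineq
    (hopt : ∀ τ : Equiv.Perm ι, ∑ t, dist (x t) (y' t) ≤ ∑ t, dist (x t) (y' (τ t)))
    (L : List ι) (hc : L ≠ []) (hnd : L.Nodup) :
    diagSum x y' L ≤ pairSum x y' (L ++ [L.headI]) := by
  have h1 := hopt L.formPerm
  have hs1 := Finset.sum_add_sum_compl L.toFinset (fun t => dist (x t) (y' t))
  have hs2 := Finset.sum_add_sum_compl L.toFinset (fun t => dist (x t) (y' (L.formPerm t)))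
  have h3 : ∑ t ∈ L.toFinsetᶜ, dist (x t) (y' (L.formPerm t))
      = ∑ t ∈ L.toFinsetᶜ, dist (x t) (y' t) :=
    Finset.sum_congr rfl fun t ht => by
      rw [List.formPerm_apply_of_notMem (by simpa using ht)]
  have h4 : ∑ t ∈ L.toFinset, dist (x t) (y' t)
      ≤ ∑ t ∈ L.toFinset, dist (x t) (y' (L.formPerm t)) := by
    rw [← hs1, ← hs2, h3] at h1
    linarith
  have e1 : ∑ t ∈ L.toFinset, dist (x t) (y' t) = diagSum x y' L :=
    List.sum_toFinset _ hnd
  have e2 : ∑ t ∈ L.toFinset, dist (x t) (y' (L.formPerm t))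
      = (L.map fun t => dist (x t) (y' (L.formPerm t))).sum :=
    List.sum_toFinset _ hnd
  rw [e1, e2, cycle_list_eq x y' L hc hnd] at h4
  exact h4

theorem chainB_remove (l₁ l₂ l₃ : List ι) (i : ι) :
    chainB x y' (l₁ ++ ((i :: l₂) ++ (i :: l₃))) =
      chainB x y' (l₁ ++ (i :: l₃))
        + (pairSum x y' ((i :: l₂) ++ [i]) - diagSum x y' (i :: l₂)) := by
  have hc : (i :: l₂ : List ι) ≠ [] := by simp
  have hA : (i :: l₃ : List ι) ≠ [] := by simp
  have hcA : ((i :: l₂) ++ (i :: l₃) : List ι) ≠ [] := by simp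
  have e0 : pairSum x y' ((i :: l₂) ++ [i])
      = pairSum x y' (i :: l₂) + dist (x ((i :: l₂).getLast hc)) (y' i) := by
    rw [pairSum_append x y' _ _ hc (by simp)]
    simp [pairSum_singleton]
  have e1 : pairSum x y' ((i :: l₂) ++ (i :: l₃)) =
      pairSum x y' (i :: l₂) + dist (x ((i :: l₂).getLast hc)) (y' i)
        + pairSum x y' (i :: l₃) := by
    rw [pairSum_append x y' _ _ hc hA]
    simp only [List.headI_cons]
  cases l₁ with
  | nil =>
    simp only [List.nil_append]
    unfold chainB
    rw [e1, diagSum_append, e0]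
    ring
  | cons a t =>
    have hl1 : (a :: t : List ι) ≠ [] := by simp
    unfold chainB
    rw [pairSum_append x y' _ _ hl1 hcA, pairSum_append x y' _ _ hl1 hA,
      e1, diagSum_append, diagSum_append, diagSum_append, e0]
    have hh : ((i :: l₂) ++ (i :: l₃)).headI = (i :: l₃).headI := rfl
    rw [hh]
    ring

theorem headI_remove (l₁ l₂ l₃ : List ι) (i : ι) :
    (l₁ ++ ((i :: l₂) ++ (i :: l₃))).headI = (l₁ ++ (i :: l₃)).headI := by
  cases l₁ <;> simp

theorem exists_nodup_cycle_decomp :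
    ∀ (l : List ι), ¬l.Nodup →
      ∃ (i : ι) (l₁ l₂ l₃ : List ι),
        l = l₁ ++ ((i :: l₂) ++ (i :: l₃)) ∧ (i :: l₂).Nodup := by
  intro l
  induction l with
  | nil => intro h; exact absurd List.nodup_nil h
  | cons a t ih =>
    intro h
    by_cases ht : t.Nodup
    · have ha : a ∈ t := by
        by_contra ha
        exact h (List.nodup_cons.mpr ⟨ha, ht⟩)
      obtain ⟨s, t', rfl⟩ := List.append_of_mem ha
      have hs := List.nodup_append'.mp ht
      refine ⟨a, [], s, t', by simp, List.nodup_cons.mpr ⟨?_, hs.1⟩⟩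
      intro hmem
      exact hs.2.2 hmem List.mem_cons_self
    · obtain ⟨i, l₁, l₂, l₃, he, hnd⟩ := ih ht
      exact ⟨i, a :: l₁, l₂, l₃, by rw [List.cons_append, ← he], hnd⟩

theorem exists_nodup_shorter
    (hopt : ∀ τ : Equiv.Perm ι, ∑ t, dist (x t) (y' t) ≤ ∑ t, dist (x t) (y' (τ t))) :
    ∀ (N : ℕ) (l : List ι), l.length ≤ N → l ≠ [] →
      ∃ l', l' ≠ [] ∧ l'.Nodup ∧ l'.headI = l.headI ∧ chainB x y' l' ≤ chainB x y' l := by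
  intro N
  induction N with
  | zero =>
    intro l hlen hne
    cases l with
    | nil => exact absurd rfl hne
    | cons a t => simp at hlen
  | succ N ih =>
    intro l hlen hne
    by_cases hnd : l.Nodup
    · exact ⟨l, hne, hnd, rfl, le_refl _⟩
    · obtain ⟨i, l₁, l₂, l₃, he, hcnd⟩ := exists_nodup_cycle_decomp l hnd
      have hl'ne : (l₁ ++ (i :: l₃) : List ι) ≠ [] := by simp
      have hlb : chainB x y' (l₁ ++ (i :: l₃)) ≤ chainB x y' l := by
        rw [he, chainB_remove]
        have hcy := cycle_ineq x y' hopt (i :: l₂) (by simp) hcnd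
        simp only [List.headI_cons] at hcy
        linarith
      have hlen' : (l₁ ++ (i :: l₃)).length ≤ N := by
        have : l.length = l₁.length + l₂.length + l₃.length + 2 := by
          rw [he]; simp; omega
        simp only [List.length_append, List.length_cons]
        omega
      obtain ⟨l'', h1, h2, h3, h4⟩ := ih (l₁ ++ (i :: l₃)) hlen' hl'ne
      refine ⟨l'', h1, h2, ?_, h4.trans hlb⟩
      rw [h3, he, headI_remove]

theorem exists_nodup_shorter'
    (hopt : ∀ τ : Equiv.Perm ι, ∑ t, dist (x t) (y' t) ≤ ∑ t, dist (x t) (y' (τ t)))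
    (l : List ι) (hne : l ≠ []) (z : X) :
    ∃ l', l' ≠ [] ∧ l'.Nodup ∧ chainV x y' z l' ≤ chainV x y' z l := by
  obtain ⟨l', h1, h2, h3, h4⟩ := exists_nodup_shorter x y' hopt l.length l le_rfl hne
  exact ⟨l', h1, h2, by unfold chainV; rw [h3]; linarith⟩

/-- Index type for chains of length between 1 and `Fintype.card ι`. -/
def chainOf (p : Fin (Fintype.card ι) × (Fin (Fintype.card ι) → ι)) : List ι :=
  (List.ofFn p.2).take (p.1 + 1)

theorem chainOf_length (p : Fin (Fintype.card ι) × (Fin (Fintype.card ι) → ι)) :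
    (chainOf p).length = p.1 + 1 := by
  have := p.1.isLt
  simp [chainOf]

theorem chainOf_ne_nil (p : Fin (Fintype.card ι) × (Fin (Fintype.card ι) → ι)) :
    chainOf p ≠ [] := by
  have h := chainOf_length p
  intro hc
  rw [hc] at h
  simp at h

theorem exists_chainOf (l : List ι) (hne : l ≠ []) (hnd : l.Nodup) :
    ∃ p, chainOf p = l := by
  have hlen : l.length ≤ Fintype.card ι := hnd.length_le_card
  have hpos : 0 < l.length := List.length_pos_iff.mpr hne
  refine ⟨⟨⟨l.length - 1, by omega⟩, fun j => l.getD j default⟩, ?_⟩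
  apply List.ext_getElem
  · rw [chainOf_length]
    simp
    omega
  · intro j h1 h2
    have hj : j < l.length := by rw [chainOf_length] at h1; simp at h1; omega
    have e1 : (chainOf ⟨⟨l.length - 1, by omega⟩, fun j => l.getD j default⟩)[j]'h1
        = (List.ofFn fun j : Fin (Fintype.card ι) => l.getD j default)[j]'
          (by simp; omega) := by
      unfold chainOf
      exact List.getElem_take
    rw [e1, List.getElem_ofFn]
    exact List.getD_eq_getElem _ _ hj

def phi (x y' : ι → X) (z : X) : ℝ :=
  ((Finset.univ : Finset (Fin (Fintype.card ι) × (Fin (Fintype.card ι) → ι))).image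
    (fun p => chainV x y' z (chainOf p))).min'
    (Finset.Nonempty.image Finset.univ_nonempty _)

theorem phi_le_nodup (z : X) (l : List ι) (hne : l ≠ []) (hnd : l.Nodup) :
    phi x y' z ≤ chainV x y' z l := by
  obtain ⟨p, hp⟩ := exists_chainOf l hne hnd
  exact Finset.min'_le _ _ (Finset.mem_image.mpr ⟨p, Finset.mem_univ p, by rw [hp]⟩)

theorem phi_le
    (hopt : ∀ τ : Equiv.Perm ι, ∑ t, dist (x t) (y' t) ≤ ∑ t, dist (x t) (y' (τ t)))
    (z : X) (l : List ι) (hne : l ≠ []) :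
    phi x y' z ≤ chainV x y' z l := by
  obtain ⟨l', h1, h2, h3⟩ := exists_nodup_shorter' x y' hopt l hne z
  exact (phi_le_nodup x y' z l' h1 h2).trans h3

theorem phi_attained (z : X) :
    ∃ l, l ≠ [] ∧ chainV x y' z l = phi x y' z := by
  have hmem := Finset.min'_mem
    ((Finset.univ : Finset (Fin (Fintype.card ι) × (Fin (Fintype.card ι) → ι))).image
      (fun p => chainV x y' z (chainOf p)))
    (Finset.Nonempty.image Finset.univ_nonempty _)
  obtain ⟨p, _, hp⟩ := Finset.mem_image.mp hmem
  exact ⟨chainOf p, chainOf_ne_nil p, hp⟩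

theorem phi_lip
    (hopt : ∀ τ : Equiv.Perm ι, ∑ t, dist (x t) (y' t) ≤ ∑ t, dist (x t) (y' (τ t)))
    (z w : X) : phi x y' z - phi x y' w ≤ dist z w := by
  obtain ⟨l, hne, hl⟩ := phi_attained x y' w
  have h1 : phi x y' z ≤ chainV x y' z l := phi_le x y' hopt z l hne
  have h2 := chainV_le x y' z w l
  linarith

theorem phi_key
    (hopt : ∀ τ : Equiv.Perm ι, ∑ t, dist (x t) (y' t) ≤ ∑ t, dist (x t) (y' (τ t)))
    (i : ι) : phi x y' (x i) - phi x y' (y' i) = dist (x i) (y' i) := by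
  have h1 : phi x y' (y' i) ≤ phi x y' (x i) - dist (x i) (y' i) := by
    obtain ⟨l, hne, hl⟩ := phi_attained x y' (x i)
    have h2 : phi x y' (y' i) ≤ chainV x y' (y' i) (i :: l) :=
      phi_le x y' hopt _ _ (by simp)
    rw [chainV_cons x y' _ i l hne, dist_self, hl] at h2
    linarith
  have h3 := phi_lip x y' hopt (x i) (y' i)
  linarith

theorem exists_potential
    (hopt : ∀ τ : Equiv.Perm ι, ∑ t, dist (x t) (y' t) ≤ ∑ t, dist (x t) (y' (τ t))) :
    ∃ φ : X → ℝ, (∀ u v, φ u - φ v ≤ dist u v)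
      ∧ ∀ i, φ (x i) - φ (y' i) = dist (x i) (y' i) :=
  ⟨phi x y', fun u v => (phi_lip x y' hopt u v), fun i => phi_key x y' hopt i⟩

end AEaux

end
/-- The Arens–Eells (transportation cost) norm of a finitely supported
signed measure on a metric space. -/
noncomputable def aeNorm {X : Type*} [MetricSpace X] (ξ : X →₀ ℝ) : ℝ :=
  sInf {c : ℝ | ∃ (n : ℕ) (a : Fin n → ℝ) (x y : Fin n → X),
    ξ = ∑ i, a i • (Finsupp.single (x i) (1 : ℝ) - Finsupp.single (y i) (1 : ℝ)) ∧
    c = ∑ i, |a i| * dist (x i) (y i)}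

theorem stmt0 {X : Type*} [MetricSpace X] (n : ℕ) (x y : Fin n → X) :
    ∃ σ : Equiv.Perm (Fin n),
      aeNorm ((∑ i, Finsupp.single (x i) (1 : ℝ)) - ∑ i, Finsupp.single (y i) (1 : ℝ)) =
        ∑ i, dist (x i) (y (σ i)) := by
  obtain ⟨σ, -, hσ⟩ := Finset.exists_min_image (Finset.univ : Finset (Equiv.Perm (Fin n)))
    (fun σ => ∑ i, dist (x i) (y (σ i))) ⟨1, Finset.mem_univ 1⟩
  refine ⟨σ, ?_⟩
  set m := ∑ i, dist (x i) (y (σ i)) with hm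
  set ξ := (∑ i, Finsupp.single (x i) (1 : ℝ)) - ∑ i, Finsupp.single (y i) (1 : ℝ) with hξ
  have hmem : m ∈ {c : ℝ | ∃ (N : ℕ) (a : Fin N → ℝ) (u v : Fin N → X),
      ξ = ∑ i, a i • (Finsupp.single (u i) (1 : ℝ) - Finsupp.single (v i) (1 : ℝ)) ∧
      c = ∑ i, |a i| * dist (u i) (v i)} := by
    refine ⟨n, fun _ => 1, x, fun i => y (σ i), ?_, ?_⟩
    · rw [hξ]
      have e1 : ∑ i, (Finsupp.single (y (σ i)) (1 : ℝ)) = ∑ i, Finsupp.single (y i) (1 : ℝ) :=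
        Equiv.sum_comp σ (fun i => Finsupp.single (y i) (1 : ℝ))
      simp only [one_smul, Finset.sum_sub_distrib]
      rw [e1]
    · simp [hm]
  have hlb : ∀ c ∈ {c : ℝ | ∃ (N : ℕ) (a : Fin N → ℝ) (u v : Fin N → X),
      ξ = ∑ i, a i • (Finsupp.single (u i) (1 : ℝ) - Finsupp.single (v i) (1 : ℝ)) ∧
      c = ∑ i, |a i| * dist (u i) (v i)}, m ≤ c := by
    rintro c ⟨N, a, u, v, hrep, hceq⟩
    rcases Nat.eq_zero_or_pos n with hn | hn
    · have hm0 : m = 0 := by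
        rw [hm]
        subst hn
        simp
      rw [hm0, hceq]
      exact Finset.sum_nonneg fun k _ => mul_nonneg (abs_nonneg _) dist_nonneg
    · haveI : Inhabited (Fin n) := ⟨⟨0, hn⟩⟩
      have hopt : ∀ τ : Equiv.Perm (Fin n),
          ∑ t, dist (x t) ((y ∘ σ) t) ≤ ∑ t, dist (x t) ((y ∘ σ) (τ t)) := by
        intro τ
        have := hσ (σ * τ) (Finset.mem_univ _)
        simpa using this
      obtain ⟨φ, hφ1, hφ2⟩ := AEaux.exists_potential x (y ∘ σ) hopt
      set L := Finsupp.linearCombination ℝ φ with hL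
      have hL1 : L ξ = (∑ i, φ (x i)) - ∑ i, φ (y i) := by
        rw [hξ]
        simp [hL, map_sub, map_sum, Finsupp.linearCombination_single]
      have hL2 : L ξ = ∑ k, a k * (φ (u k) - φ (v k)) := by
        rw [hrep]
        simp [hL, map_sum, map_smul, map_sub, Finsupp.linearCombination_single, smul_eq_mul]
      have hyσ : ∑ i, φ (y (σ i)) = ∑ i, φ (y i) :=
        Equiv.sum_comp σ (fun i => φ (y i))
      have hmL : m = L ξ := by
        rw [hL1, hm, ← hyσ, ← Finset.sum_sub_distrib]
        exact Finset.sum_congr rfl fun i _ => (hφ2 i).symm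
      rw [hmL, hL2, hceq]
      refine Finset.sum_le_sum fun k _ => ?_
      have habs : |φ (u k) - φ (v k)| ≤ dist (u k) (v k) := by
        rw [abs_sub_le_iff]
        exact ⟨hφ1 (u k) (v k), (hφ1 (v k) (u k)).trans (dist_comm (v k) (u k)).le⟩
      calc a k * (φ (u k) - φ (v k)) ≤ |a k * (φ (u k) - φ (v k))| := le_abs_self _
        _ = |a k| * |φ (u k) - φ (v k)| := abs_mul _ _
        _ ≤ |a k| * dist (u k) (v k) := by
            exact mul_le_mul_of_nonneg_left habs (abs_nonneg _)
  exact IsLeast.csInf_eq ⟨hmem, hlb⟩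
end

section
/- Let G be a group acting by linear isometries on a Banach space V via \pi, and suppose v \in V satisfies 0 \in closure of the convex hull of the orbit {\pi(g)v : g \in G}. Then v lies in V_G, the closed linear span of {w - \pi(g)w : w \in V, g \in G}. -/
theorem stmt6 {G V : Type*} [Group G] [NormedAddCommGroup V] [NormedSpace ℝ V]
    [CompleteSpace V] (π : G →* (V ≃ₗᵢ[ℝ] V)) (v : V)
    (hv : (0 : V) ∈ closure (convexHull ℝ (Set.range fun g : G => π g v))) :
    v ∈ (Submodule.span ℝ
      {u : V | ∃ (w : V) (g : G), u = w - π g w}).topologicalClosure := by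
  set M := Submodule.span ℝ {u : V | ∃ (w : V) (g : G), u = w - π g w} with hM
  -- the set of x with v - x ∈ M is convex and contains the orbit
  have hconv : Convex ℝ {x : V | v - x ∈ M} := by
    intro x hx y hy a b ha hb hab
    have h1 : a • v + b • v = v := by rw [← add_smul, hab, one_smul]
    have : v - (a • x + b • y) = a • (v - x) + b • (v - y) := by
      rw [smul_sub, smul_sub]; conv_lhs => rw [← h1]
      abel
    simpa [this] using M.add_mem (M.smul_mem a hx) (M.smul_mem b hy)
  have horb : Set.range (fun g : G => π g v) ⊆ {x : V | v - x ∈ M} := by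
    rintro _ ⟨g, rfl⟩
    exact Submodule.subset_span ⟨v, g, rfl⟩
  have hhull : convexHull ℝ (Set.range fun g : G => π g v) ⊆ {x : V | v - x ∈ M} :=
    convexHull_min horb hconv
  have key : v ∈ closure (M : Set V) := by
    have := map_mem_closure (f := fun x : V => v - x) (t := (M : Set V))
      (continuous_const.sub continuous_id) hv (fun x hx => (hhull hx : v - x ∈ (M : Set V)))
    simpa using this
  exact key
end

section
/- Let G be a group, (V,\pi) an isometric linear G-action on a Banach space V, and suppose for every single vector v \in V_G and \epsilon > 0 there exists a convex combination \beta = \sum_i \lambda_i g_i of group elements with \|\pi(\beta)v\| < \epsilon. Then for every finite subset F \subseteq V_G and \epsilon > 0 there exists a single convex combination \beta with \|\pi(\beta)v\| < \epsilon simultaneously for all v \in F. -/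
open Finset

theorem stmt7 {G V : Type*} [Group G] [NormedAddCommGroup V] [NormedSpace ℝ V]
    [CompleteSpace V] (π : G →* (V ≃ₗᵢ[ℝ] V))
    (h : ∀ v ∈ (Submodule.span ℝ
        {u : V | ∃ (w : V) (g : G), u = w - π g w}).topologicalClosure,
      ∀ ε > (0 : ℝ), ∃ (n : ℕ) (lam : Fin n → ℝ) (g : Fin n → G),
        (∀ i, 0 < lam i) ∧ (∑ i, lam i) = 1 ∧
        ‖∑ i, lam i • π (g i) v‖ < ε) :
    ∀ F : Finset V, (↑F : Set V) ⊆ ↑(Submodule.span ℝ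
        {u : V | ∃ (w : V) (g : G), u = w - π g w}).topologicalClosure →
      ∀ ε > (0 : ℝ), ∃ (n : ℕ) (lam : Fin n → ℝ) (g : Fin n → G),
        (∀ i, 0 < lam i) ∧ (∑ i, lam i) = 1 ∧
        ∀ v ∈ F, ‖∑ i, lam i • π (g i) v‖ < ε := by
  set M := (Submodule.span ℝ
      {u : V | ∃ (w : V) (g : G), u = w - π g w}).topologicalClosure with hM
  -- invariance of M
  have hinv : ∀ g : G, ∀ v ∈ M, π g v ∈ M := by
    intro g v hv
    have h1 : v - π g v ∈ M := by
      apply Submodule.le_topologicalClosure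
      exact Submodule.subset_span ⟨v, g, rfl⟩
    have : π g v = v - (v - π g v) := by abel
    rw [this]
    exact Submodule.sub_mem _ hv h1
  -- contraction
  have hcontr : ∀ (n : ℕ) (lam : Fin n → ℝ) (g : Fin n → G) (v : V),
      (∀ i, 0 ≤ lam i) → (∑ i, lam i) = 1 →
      ‖∑ i, lam i • π (g i) v‖ ≤ ‖v‖ := by
    intro n lam g v hpos hsum
    calc ‖∑ i, lam i • π (g i) v‖ ≤ ∑ i, ‖lam i • π (g i) v‖ := norm_sum_le _ _
      _ = ∑ i, lam i * ‖v‖ := by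
          refine Finset.sum_congr rfl fun i _ => ?_
          rw [norm_smul, Real.norm_eq_abs, abs_of_nonneg (hpos i),
            LinearIsometryEquiv.norm_map]
      _ = ‖v‖ := by rw [← Finset.sum_mul, hsum, one_mul]
  intro F hF ε hε
  classical
  induction F using Finset.induction with
  | empty =>
      exact ⟨1, fun _ => 1, fun _ => 1, fun _ => one_pos, by simp, by simp⟩
  | @insert a s ha ih =>
      have hsub : (↑s : Set V) ⊆ ↑M := fun x hx => hF (by simp [hx])
      have haM : a ∈ M := hF (by simp)
      obtain ⟨n, lam, g, hlam, hlsum, hbound⟩ := ih hsub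
      set w := ∑ i, lam i • π (g i) a with hw
      have hwM : w ∈ M :=
        Submodule.sum_mem _ fun i _ => Submodule.smul_mem _ _ (hinv _ _ haM)
      obtain ⟨m, mu, hg, hmu, hmsum, hwb⟩ := h w hwM ε hε
      refine ⟨m * n, fun k => mu (finProdFinEquiv.symm k).1 * lam (finProdFinEquiv.symm k).2,
        fun k => hg (finProdFinEquiv.symm k).1 * g (finProdFinEquiv.symm k).2,
        fun k => mul_pos (hmu _) (hlam _), ?_, ?_⟩
      · rw [← finProdFinEquiv.sum_comp]
        simp only [Equiv.symm_apply_apply]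
        rw [Fintype.sum_prod_type]
        simp only [← Finset.mul_sum, hlsum, mul_one, hmsum]
      · have key : ∀ v : V,
            (∑ k : Fin (m * n), (mu (finProdFinEquiv.symm k).1 *
                lam (finProdFinEquiv.symm k).2) •
              π (hg (finProdFinEquiv.symm k).1 * g (finProdFinEquiv.symm k).2) v) =
            ∑ j, mu j • π (hg j) (∑ i, lam i • π (g i) v) := by
          intro v
          rw [← finProdFinEquiv.sum_comp]
          simp only [Equiv.symm_apply_apply]
          rw [Fintype.sum_prod_type]
          refine Finset.sum_congr rfl fun j _ => ?_
          rw [map_sum, Finset.smul_sum]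
          refine Finset.sum_congr rfl fun i _ => ?_
          rw [map_mul, mul_smul, map_smul]
          rfl
        intro v hv
        rw [key]
        rcases Finset.mem_insert.1 hv with rfl | hvs
        · exact hwb
        · exact lt_of_le_of_lt
            (hcontr m mu hg _ (fun j => (hmu j).le) hmsum) (hbound v hvs)
end

section
/- Let G be a group acting by isometries on a metric space X such that for any x \in X and g \in G there exists h \in G with hx = gx and h^2 x = x. Then for every x and g, the element \delta_x - \delta_{gx} of the Arens–Eells space can be written as (1/2)(w - \pi(h)w) with w = \delta_x - \delta_{hx}; in particular \delta_x - \delta_{gx} lies in the closed span of {v - \pi(h)v : v, h}. -/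
open Finsupp

theorem stmt12 {G X : Type*} [Group G] [MetricSpace X] [MulAction G X]
    (hiso : ∀ g : G, Isometry (fun x : X => g • x))
    (htrans : ∀ (x : X) (g : G), ∃ h : G, h • x = g • x ∧ h • (h • x) = x) :
    ∀ (x : X) (g : G), ∃ h : G,
      h • x = g • x ∧ h • (h • x) = x ∧
      (Finsupp.single x (1 : ℝ) - Finsupp.single (g • x) (1 : ℝ)) =
        (1 / 2 : ℝ) • ((Finsupp.single x (1 : ℝ) - Finsupp.single (h • x) (1 : ℝ)) -
          Finsupp.mapDomain (fun z : X => h • z)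
            (Finsupp.single x (1 : ℝ) - Finsupp.single (h • x) (1 : ℝ))) ∧
      (Finsupp.single x (1 : ℝ) - Finsupp.single (g • x) (1 : ℝ)) ∈
        Submodule.span ℝ {ξ : X →₀ ℝ | ∃ (v : X →₀ ℝ) (k : G),
          ξ = v - Finsupp.mapDomain (fun z : X => k • z) v} := by
  intro x g
  obtain ⟨h, h1, h2⟩ := htrans x g
  have hmap : Finsupp.mapDomain (fun z : X => h • z)
      (Finsupp.single x (1 : ℝ) - Finsupp.single (h • x) (1 : ℝ)) =
      Finsupp.single (h • x) (1 : ℝ) - Finsupp.single x (1 : ℝ) := by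
    have e : Finsupp.mapDomain (fun z : X => h • z)
        (Finsupp.single x (1 : ℝ) - Finsupp.single (h • x) (1 : ℝ)) =
        Finsupp.lmapDomain ℝ ℝ (fun z : X => h • z)
          (Finsupp.single x (1 : ℝ) - Finsupp.single (h • x) (1 : ℝ)) := rfl
    rw [e, map_sub, Finsupp.lmapDomain_apply, Finsupp.lmapDomain_apply,
      Finsupp.mapDomain_single, Finsupp.mapDomain_single, h2]
  have key : (Finsupp.single x (1 : ℝ) - Finsupp.single (g • x) (1 : ℝ)) =
      (1 / 2 : ℝ) • ((Finsupp.single x (1 : ℝ) - Finsupp.single (h • x) (1 : ℝ)) -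
        Finsupp.mapDomain (fun z : X => h • z)
          (Finsupp.single x (1 : ℝ) - Finsupp.single (h • x) (1 : ℝ))) := by
    rw [hmap, ← h1]
    module
  refine ⟨h, h1, h2, key, ?_⟩
  rw [key]
  exact Submodule.smul_mem _ _ (Submodule.subset_span
    ⟨Finsupp.single x (1 : ℝ) - Finsupp.single (h • x) (1 : ℝ), h, rfl⟩)
end

section
/- Let (X,d) be a metric space and \xi, \zeta mean-zero finitely supported signed measures on X with dist(supp \xi, supp \zeta) \geq max{diam(supp \xi), diam(supp \zeta)}. Then \|\xi + \zeta\|_{AE} = \|\xi\|_{AE} + \|\zeta\|_{AE}. -/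
open Finsupp

open Pointwise

namespace AE14

variable {X : Type*} [MetricSpace X]

def aeSet (ξ : X →₀ ℝ) : Set ℝ :=
  {c : ℝ | ∃ (n : ℕ) (a : Fin n → ℝ) (x y : Fin n → X),
    ξ = ∑ i, a i • (Finsupp.single (x i) (1 : ℝ) - Finsupp.single (y i) (1 : ℝ)) ∧
    c = ∑ i, |a i| * dist (x i) (y i)}

lemma aeNorm_eq (ξ : X →₀ ℝ) : aeNorm ξ = sInf (aeSet ξ) := rfl

lemma aeSet_nonneg {ξ : X →₀ ℝ} {c : ℝ} (hc : c ∈ aeSet ξ) : 0 ≤ c := by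
  obtain ⟨n, a, x, y, -, rfl⟩ := hc
  exact Finset.sum_nonneg fun i _ => mul_nonneg (abs_nonneg _) dist_nonneg

lemma aeSet_bddBelow (ξ : X →₀ ℝ) : BddBelow (aeSet ξ) :=
  ⟨0, fun c hc => aeSet_nonneg hc⟩

lemma aeNorm_nonneg (ξ : X →₀ ℝ) : 0 ≤ aeNorm ξ :=
  Real.sInf_nonneg fun _ hc => aeSet_nonneg hc

lemma zero_mem_aeSet : (0:ℝ) ∈ aeSet (0 : X →₀ ℝ) :=
  ⟨0, Fin.elim0, Fin.elim0, Fin.elim0, by simp, by simp⟩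

lemma aeNorm_zero : aeNorm (0 : X →₀ ℝ) = 0 :=
  le_antisymm (csInf_le (aeSet_bddBelow _) zero_mem_aeSet) (aeNorm_nonneg 0)

/-- representation of a mean-zero finitely supported measure -/
lemma repr_eq {ξ : X →₀ ℝ} (hξ : (ξ.sum fun _ r => r) = 0) (x₀ : X) :
    ξ = ∑ v ∈ ξ.support, ξ v • (single v (1:ℝ) - single x₀ 1) := by
  simp only [smul_sub]
  rw [Finset.sum_sub_distrib, ← Finset.sum_smul]
  have h1 : ∑ v ∈ ξ.support, ξ v • single v (1:ℝ) = ξ := by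
    have h0 : ∑ v ∈ ξ.support, ξ v • single v (1:ℝ) = ∑ v ∈ ξ.support, single v (ξ v) :=
      Finset.sum_congr rfl fun v _ => by rw [Finsupp.smul_single, smul_eq_mul, mul_one]
    have h2 := Finsupp.sum_single ξ
    rw [Finsupp.sum] at h2
    rw [h0, h2]
  have h2 : ∑ v ∈ ξ.support, ξ v = 0 := hξ
  rw [h1, h2, zero_smul, sub_zero]

lemma aeSet_nonempty {ξ : X →₀ ℝ} (hξ : (ξ.sum fun _ r => r) = 0) :
    (aeSet ξ).Nonempty := by
  rcases eq_or_ne ξ 0 with rfl | hne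
  · exact ⟨0, zero_mem_aeSet⟩
  · obtain ⟨x₀, hx₀⟩ := Finsupp.support_nonempty_iff.2 hne
    set s := ξ.support with hs
    set n := s.card with hn
    set e := s.equivFin with he
    refine ⟨_, ⟨n, fun i => ξ (e.symm i), fun i => (e.symm i : X), fun _ => x₀, ?_, rfl⟩⟩
    have h1 : ∑ i : Fin n, ξ ((e.symm i : X)) • (single ((e.symm i : X)) (1:ℝ) - single x₀ 1)
        = ∑ v ∈ s, ξ v • (single (v:X) (1:ℝ) - single x₀ 1) := by
      rw [← Finset.sum_coe_sort s (fun v => ξ v • (single (v:X) (1:ℝ) - single x₀ 1))]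
      exact Fintype.sum_equiv e.symm _ _ (fun i => rfl)
    rw [h1, ← repr_eq hξ x₀]

lemma add_mem_aeSet {ξ ζ : X →₀ ℝ} {c₁ c₂ : ℝ} (h₁ : c₁ ∈ aeSet ξ) (h₂ : c₂ ∈ aeSet ζ) :
    c₁ + c₂ ∈ aeSet (ξ + ζ) := by
  obtain ⟨n, a, x, y, hx, rfl⟩ := h₁
  obtain ⟨m, b, u, v, hu, rfl⟩ := h₂
  refine ⟨n + m, Fin.append a b, Fin.append x u, Fin.append y v, ?_, ?_⟩ <;>
    simp [Fin.sum_univ_add, Fin.append_left, Fin.append_right, hx, hu]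

lemma aeNorm_add_le {ξ ζ : X →₀ ℝ} (hξ : (ξ.sum fun _ r => r) = 0)
    (hζ : (ζ.sum fun _ r => r) = 0) :
    aeNorm (ξ + ζ) ≤ aeNorm ξ + aeNorm ζ := by
  have h1 := aeSet_nonempty hξ
  have h2 := aeSet_nonempty hζ
  have key : ∀ c₁ ∈ aeSet ξ, ∀ c₂ ∈ aeSet ζ, aeNorm (ξ + ζ) ≤ c₁ + c₂ :=
    fun c₁ hc₁ c₂ hc₂ => csInf_le (aeSet_bddBelow _) (add_mem_aeSet hc₁ hc₂)
  have A : aeNorm (ξ + ζ) - aeNorm ξ ≤ aeNorm ζ := by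
    refine le_csInf h2 fun c₂ hc₂ => ?_
    have B : aeNorm (ξ + ζ) - c₂ ≤ aeNorm ξ := by
      refine le_csInf h1 fun c₁ hc₁ => ?_
      have := key c₁ hc₁ c₂ hc₂
      linarith
    linarith
  linarith

lemma smul_mem_aeSet {ξ : X →₀ ℝ} {c t : ℝ} (ht : 0 < t) (hc : c ∈ aeSet ξ) :
    t * c ∈ aeSet (t • ξ) := by
  obtain ⟨n, a, x, y, hx, rfl⟩ := hc
  refine ⟨n, fun i => t * a i, x, y, ?_, ?_⟩
  · rw [hx, Finset.smul_sum]
    exact Finset.sum_congr rfl fun i _ => by rw [smul_smul]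
  · rw [Finset.mul_sum]
    exact Finset.sum_congr rfl fun i _ => by
      rw [abs_mul, abs_of_pos ht]; ring

lemma aeNorm_smul {ξ : X →₀ ℝ} {t : ℝ} (ht : 0 < t) :
    aeNorm (t • ξ) = t * aeNorm ξ := by
  have h : aeSet (t • ξ) = (fun c => t * c) '' aeSet ξ := by
    ext c
    constructor
    · intro hc
      have := smul_mem_aeSet (inv_pos.2 ht) hc
      rw [inv_smul_smul₀ ht.ne'] at this
      exact ⟨t⁻¹ * c, this, by field_simp⟩
    · rintro ⟨d, hd, rfl⟩
      exact smul_mem_aeSet ht hd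
  rw [aeNorm_eq, h, aeNorm_eq]
  rcases (aeSet ξ).eq_empty_or_nonempty with he | hne
  · simp [he, Real.sInf_empty]
  · have himg : (fun c => t * c) '' aeSet ξ = t • aeSet ξ := by
      ext c; simp [Set.mem_smul_set, smul_eq_mul, eq_comm]
    rw [himg, Real.sInf_smul_of_nonneg ht.le, smul_eq_mul]


/-! ### Pairing with a function -/

noncomputable def pair (F : X → ℝ) : (X →₀ ℝ) →ₗ[ℝ] ℝ := Finsupp.linearCombination ℝ F

lemma pair_apply (F : X → ℝ) (ξ : X →₀ ℝ) : pair F ξ = ξ.sum fun x r => r * F x := by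
  simp [pair, Finsupp.linearCombination_apply, smul_eq_mul]

lemma pair_single_sub (F : X → ℝ) (x y : X) :
    pair F (single x (1:ℝ) - single y 1) = F x - F y := by
  simp [pair, map_sub, Finsupp.linearCombination_single]

lemma dist_mem_aeSet (x y : X) :
    dist x y ∈ aeSet (single x (1:ℝ) - single y 1) := by
  refine ⟨1, fun _ => 1, fun _ => x, fun _ => y, by simp, by simp⟩

lemma aeNorm_single_sub_le (x y : X) :
    aeNorm (single x (1:ℝ) - single y 1) ≤ dist x y :=
  csInf_le (aeSet_bddBelow _) (dist_mem_aeSet x y)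

lemma pair_le_aeNorm {F : X → ℝ} (hF : LipschitzWith 1 F) {ξ : X →₀ ℝ}
    (hξ : (ξ.sum fun _ r => r) = 0) : pair F ξ ≤ aeNorm ξ := by
  refine le_csInf (aeSet_nonempty hξ) ?_
  rintro c ⟨n, a, x, y, rfl, rfl⟩
  rw [map_sum]
  refine Finset.sum_le_sum fun i _ => ?_
  rw [map_smul, pair_single_sub, smul_eq_mul]
  calc a i * (F (x i) - F (y i)) ≤ |a i * (F (x i) - F (y i))| := le_abs_self _
    _ = |a i| * |F (x i) - F (y i)| := abs_mul _ _
    _ ≤ |a i| * dist (x i) (y i) := by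
        refine mul_le_mul_of_nonneg_left ?_ (abs_nonneg _)
        have := hF.dist_le_mul (x i) (y i)
        rwa [NNReal.coe_one, one_mul, Real.dist_eq] at this

/-! ### The submodule of mean-zero measures -/

noncomputable def meanZero (X : Type*) [MetricSpace X] : Submodule ℝ (X →₀ ℝ) where
  carrier := {μ | (μ.sum fun _ r => r) = 0}
  add_mem' := by
    intro a b ha hb
    simp only [Set.mem_setOf_eq] at *
    rw [Finsupp.sum_add_index' (fun _ => rfl) (fun _ _ _ => rfl), ha, hb, add_zero]
  zero_mem' := by simp
  smul_mem' := by
    intro c μ h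
    simp only [Set.mem_setOf_eq] at *
    rw [Finsupp.sum_smul_index (fun _ => rfl), Finsupp.sum, ← Finset.mul_sum]
    rw [Finsupp.sum] at h
    rw [h, mul_zero]

lemma mem_meanZero {μ : X →₀ ℝ} : μ ∈ meanZero X ↔ (μ.sum fun _ r => r) = 0 := Iff.rfl

lemma single_sub_mem (x y : X) : single x (1:ℝ) - single y 1 ∈ meanZero X := by
  rw [mem_meanZero, Finsupp.sum_sub_index (fun _ _ _ => rfl),
    Finsupp.sum_single_index rfl, Finsupp.sum_single_index rfl, sub_self]

lemma exists_dual {ξ : X →₀ ℝ} (hξ : (ξ.sum fun _ r => r) = 0) :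
    ∃ F : X → ℝ, LipschitzWith 1 F ∧ pair F ξ = aeNorm ξ := by
  rcases eq_or_ne ξ 0 with rfl | hne
  · exact ⟨fun _ => 0, LipschitzWith.const' 0, by rw [map_zero, aeNorm_zero]⟩
  · obtain ⟨x₀, hx₀⟩ := Finsupp.support_nonempty_iff.2 hne
    set ξ' : meanZero X := ⟨ξ, hξ⟩ with hξ'def
    have hξ'0 : ξ' ≠ 0 := by
      intro h
      exact hne (congrArg Subtype.val h)
    obtain ⟨g, hg1, hg2⟩ := exists_extension_of_le_sublinear
      (LinearPMap.mkSpanSingleton ξ' (aeNorm ξ) hξ'0)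
      (fun μ => aeNorm (μ : X →₀ ℝ))
      (fun c hc μ => by
        show aeNorm ((c • μ : meanZero X) : X →₀ ℝ) = c * aeNorm (μ : X →₀ ℝ)
        rw [show ((c • μ : meanZero X) : X →₀ ℝ) = c • (μ : X →₀ ℝ) from rfl,
          aeNorm_smul hc])
      (fun μ ν => by
        show aeNorm ((μ + ν : meanZero X) : X →₀ ℝ) ≤ _
        rw [show ((μ + ν : meanZero X) : X →₀ ℝ) = (μ : X →₀ ℝ) + ν from rfl]
        exact aeNorm_add_le μ.2 ν.2)
      (by
        rintro ⟨x, hx⟩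
        obtain ⟨c, rfl⟩ := Submodule.mem_span_singleton.1 hx
        rw [LinearPMap.mkSpanSingleton'_apply]
        show c • aeNorm ξ ≤ aeNorm ((c • ξ' : meanZero X) : X →₀ ℝ)
        rw [show ((c • ξ' : meanZero X) : X →₀ ℝ) = c • (ξ : X →₀ ℝ) from rfl]
        rcases lt_trichotomy c 0 with h|h|h
        · have h1 : c • aeNorm ξ ≤ 0 := by
            rw [smul_eq_mul]
            exact mul_nonpos_of_nonpos_of_nonneg h.le (aeNorm_nonneg _)
          exact h1.trans (aeNorm_nonneg _)
        · subst h; simp [aeNorm_zero]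
        · rw [aeNorm_smul h, smul_eq_mul])
    set F : X → ℝ := fun x => g ⟨single x 1 - single x₀ 1, single_sub_mem x x₀⟩ with hF
    have key : ∀ x y : X, F x - F y ≤ dist x y := by
      intro x y
      have hsub : (⟨single x (1:ℝ) - single x₀ 1, single_sub_mem x x₀⟩ : meanZero X)
          - ⟨single y 1 - single x₀ 1, single_sub_mem y x₀⟩
          = ⟨single x 1 - single y 1, single_sub_mem x y⟩ := by
        apply Subtype.ext
        show (single x (1:ℝ) - single x₀ 1) - (single y 1 - single x₀ 1) = _
        abel
      calc F x - F y = g (⟨single x 1 - single x₀ 1, single_sub_mem x x₀⟩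
            - ⟨single y 1 - single x₀ 1, single_sub_mem y x₀⟩) := (map_sub g _ _).symm
        _ = g ⟨single x 1 - single y 1, single_sub_mem x y⟩ := by rw [hsub]
        _ ≤ aeNorm (single x (1:ℝ) - single y 1) := hg2 _
        _ ≤ dist x y := aeNorm_single_sub_le x y
    have hL : LipschitzWith 1 F := by
      apply LipschitzWith.of_dist_le_mul
      intro x y
      rw [NNReal.coe_one, one_mul, Real.dist_eq, abs_sub_le_iff]
      exact ⟨key x y, by rw [dist_comm]; exact key y x⟩
    have hrep : ξ' = ∑ v ∈ ξ.support,
        ξ v • (⟨single v 1 - single x₀ 1, single_sub_mem v x₀⟩ : meanZero X) := by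
      apply Subtype.ext
      rw [Submodule.coe_sum]
      simp only [SetLike.val_smul]
      exact repr_eq hξ x₀
    have hpair : g ξ' = pair F ξ := by
      rw [hrep, map_sum, pair_apply, Finsupp.sum]
      refine Finset.sum_congr rfl fun v _ => ?_
      rw [map_smul, smul_eq_mul]
    refine ⟨F, hL, ?_⟩
    rw [← hpair]
    have := hg1 ⟨ξ', Submodule.mem_span_singleton_self ξ'⟩
    rw [this, LinearPMap.mkSpanSingleton_apply]

lemma pair_congr {F G : X → ℝ} {ξ : X →₀ ℝ} (h : ∀ x ∈ ξ.support, F x = G x) :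
    pair F ξ = pair G ξ := by
  rw [pair_apply, pair_apply, Finsupp.sum, Finsupp.sum]
  exact Finset.sum_congr rfl fun v hv => by rw [h v hv]

lemma pair_sub_const (F : X → ℝ) (c : ℝ) {ξ : X →₀ ℝ} (hξ : (ξ.sum fun _ r => r) = 0) :
    pair (fun x => F x - c) ξ = pair F ξ := by
  rw [pair_apply, pair_apply, Finsupp.sum, Finsupp.sum]
  have h1 : ∀ v ∈ ξ.support, ξ v * (F v - c) = ξ v * F v - ξ v * c := fun v _ => by ring
  rw [Finset.sum_congr rfl h1, Finset.sum_sub_distrib, ← Finset.sum_mul]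
  rw [Finsupp.sum] at hξ
  rw [hξ, zero_mul, sub_zero]

lemma exists_two {ξ : X →₀ ℝ} (hξ : (ξ.sum fun _ r => r) = 0) (hne : ξ ≠ 0) :
    ∃ a ∈ ξ.support, ∃ b ∈ ξ.support, a ≠ b := by
  obtain ⟨a, ha⟩ := Finsupp.support_nonempty_iff.2 hne
  refine ⟨a, ha, ?_⟩
  by_contra hcon
  push_neg at hcon
  have hsup : ξ.support = {a} :=
    Finset.eq_singleton_iff_unique_mem.2 ⟨ha, fun b hb => (hcon b hb).symm⟩
  rw [Finsupp.sum, hsup, Finset.sum_singleton] at hξ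
  exact Finsupp.mem_support_iff.1 ha hξ

lemma diam_pos {ξ : X →₀ ℝ} (hξ : (ξ.sum fun _ r => r) = 0) (hne : ξ ≠ 0) :
    0 < Metric.diam (ξ.support : Set X) := by
  obtain ⟨a, ha, b, hb, hab⟩ := exists_two hξ hne
  have h1 : dist a b ≤ Metric.diam (ξ.support : Set X) :=
    Metric.dist_le_diam_of_mem ξ.support.finite_toSet.isBounded
      (by exact_mod_cast ha) (by exact_mod_cast hb)
  have h2 := dist_pos.2 hab
  linarith

end AE14

theorem stmt14 {X : Type*} [MetricSpace X] (ξ ζ : X →₀ ℝ)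
    (hξ : (ξ.sum fun _ r => r) = 0) (hζ : (ζ.sum fun _ r => r) = 0)
    (hfar : ∀ a ∈ (ξ.support : Set X), ∀ b ∈ (ζ.support : Set X),
      max (Metric.diam (ξ.support : Set X)) (Metric.diam (ζ.support : Set X)) ≤
        dist a b) :
    aeNorm (ξ + ζ) = aeNorm ξ + aeNorm ζ := by
  classical
  rcases eq_or_ne ξ 0 with rfl | hξne
  · rw [zero_add, AE14.aeNorm_zero, zero_add]
  rcases eq_or_ne ζ 0 with rfl | hζne
  · rw [add_zero, AE14.aeNorm_zero, add_zero]
  refine le_antisymm (AE14.aeNorm_add_le hξ hζ) ?_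
  obtain ⟨F₁, hF₁L, hF₁⟩ := AE14.exists_dual hξ
  obtain ⟨F₂, hF₂L, hF₂⟩ := AE14.exists_dual hζ
  have hSne : ξ.support.Nonempty := Finsupp.support_nonempty_iff.2 hξne
  have hTne : ζ.support.Nonempty := Finsupp.support_nonempty_iff.2 hζne
  set dS := Metric.diam (ξ.support : Set X) with hdSdef
  set dT := Metric.diam (ζ.support : Set X) with hdTdef
  have hdS : 0 < dS := AE14.diam_pos hξ hξne
  have hdisj : ∀ x, x ∈ ξ.support → x ∉ ζ.support := by
    intro x hx hx'
    have h0 := hfar x (by exact_mod_cast hx) x (by exact_mod_cast hx')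
    rw [dist_self] at h0
    have h1 := le_max_left dS dT
    linarith
  set m₁ := ξ.support.inf' hSne F₁ with hm₁def
  set m₂ := ζ.support.inf' hTne F₂ with hm₂def
  set h : X → ℝ := fun x => if x ∈ ξ.support then F₁ x - m₁ else F₂ x - m₂ with hhdef
  have lipbound : ∀ (F : X → ℝ), LipschitzWith 1 F → ∀ x y : X, F x - F y ≤ dist x y := by
    intro F hFL x y
    have h0 := hFL.dist_le_mul x y
    rw [NNReal.coe_one, one_mul, Real.dist_eq] at h0
    have := le_abs_self (F x - F y)
    linarith
  have hb₁ : ∀ x ∈ ξ.support, 0 ≤ F₁ x - m₁ ∧ F₁ x - m₁ ≤ dS := by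
    intro x hx
    obtain ⟨w, hw, hwm⟩ := Finset.exists_mem_eq_inf' hSne F₁
    have h1 := Finset.inf'_le F₁ hx
    have h2 : F₁ x - F₁ w ≤ dist x w := lipbound F₁ hF₁L x w
    have h3 : dist x w ≤ dS :=
      Metric.dist_le_diam_of_mem ξ.support.finite_toSet.isBounded
        (by exact_mod_cast hx) (by exact_mod_cast hw)
    rw [← hm₁def] at hwm
    constructor
    · linarith
    · rw [hwm]; linarith
  have hb₂ : ∀ x ∈ ζ.support, 0 ≤ F₂ x - m₂ ∧ F₂ x - m₂ ≤ dT := by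
    intro x hx
    obtain ⟨w, hw, hwm⟩ := Finset.exists_mem_eq_inf' hTne F₂
    have h1 := Finset.inf'_le F₂ hx
    have h2 : F₂ x - F₂ w ≤ dist x w := lipbound F₂ hF₂L x w
    have h3 : dist x w ≤ dT :=
      Metric.dist_le_diam_of_mem ζ.support.finite_toSet.isBounded
        (by exact_mod_cast hx) (by exact_mod_cast hw)
    rw [← hm₂def] at hwm
    constructor
    · linarith
    · rw [hwm]; linarith
  have hLip : LipschitzOnWith 1 h ((ξ.support : Set X) ∪ (ζ.support : Set X)) := by
    rw [lipschitzOnWith_iff_dist_le_mul]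
    intro x hx y hy
    rw [NNReal.coe_one, one_mul, Real.dist_eq]
    have habs : ∀ a b c : ℝ, a - b ≤ c → b - a ≤ c → |a - b| ≤ c := by
      intro a b c u v; rw [abs_sub_le_iff]; exact ⟨u, v⟩
    by_cases hxS : x ∈ ξ.support <;> by_cases hyS : y ∈ ξ.support
    · -- both in S
      simp only [hhdef, if_pos hxS, if_pos hyS]
      refine habs _ _ _ (by have := lipbound F₁ hF₁L x y; linarith)
        (by have := lipbound F₁ hF₁L y x; rw [dist_comm] at this; linarith)
    · -- x ∈ S, y ∉ S so y ∈ T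
      have hyT : y ∈ ζ.support := by
        rcases hy with hy | hy
        · exact absurd (by exact_mod_cast hy) hyS
        · exact_mod_cast hy
      simp only [hhdef, if_pos hxS, if_neg hyS]
      have hB1 := hb₁ x hxS
      have hB2 := hb₂ y hyT
      have hd := hfar x (by exact_mod_cast hxS) y (by exact_mod_cast hyT)
      have hmS : dS ≤ max dS dT := le_max_left _ _
      have hmT : dT ≤ max dS dT := le_max_right _ _
      exact habs _ _ _ (by linarith) (by linarith)
    · -- x ∉ S so x ∈ T, y ∈ S
      have hxT : x ∈ ζ.support := by
        rcases hx with hx | hx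
        · exact absurd (by exact_mod_cast hx) hxS
        · exact_mod_cast hx
      simp only [hhdef, if_neg hxS, if_pos hyS]
      have hB1 := hb₁ y hyS
      have hB2 := hb₂ x hxT
      have hd := hfar y (by exact_mod_cast hyS) x (by exact_mod_cast hxT)
      rw [dist_comm] at hd
      have hmS : dS ≤ max dS dT := le_max_left _ _
      have hmT : dT ≤ max dS dT := le_max_right _ _
      exact habs _ _ _ (by linarith) (by linarith)
    · -- both in T
      have hxT : x ∈ ζ.support := by
        rcases hx with hx | hx
        · exact absurd (by exact_mod_cast hx) hxS
        · exact_mod_cast hx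
      have hyT : y ∈ ζ.support := by
        rcases hy with hy | hy
        · exact absurd (by exact_mod_cast hy) hyS
        · exact_mod_cast hy
      simp only [hhdef, if_neg hxS, if_neg hyS]
      refine habs _ _ _ (by have := lipbound F₂ hF₂L x y; linarith)
        (by have := lipbound F₂ hF₂L y x; rw [dist_comm] at this; linarith)
  obtain ⟨H, HL, HEq⟩ := hLip.extend_real
  have hsum : ((ξ + ζ).sum fun _ r => r) = 0 := by
    rw [Finsupp.sum_add_index' (fun _ => rfl) (fun _ _ _ => rfl), hξ, hζ, add_zero]
  have main := AE14.pair_le_aeNorm HL hsum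
  rw [map_add] at main
  have e₁ : AE14.pair H ξ = aeNorm ξ := by
    have hc : AE14.pair H ξ = AE14.pair (fun x => F₁ x - m₁) ξ := by
      refine AE14.pair_congr fun x hx => ?_
      have hmem : x ∈ (ξ.support : Set X) ∪ (ζ.support : Set X) :=
        Or.inl (by exact_mod_cast hx)
      rw [← HEq hmem, hhdef]
      simp [hx]
    rw [hc, AE14.pair_sub_const F₁ m₁ hξ, hF₁]
  have e₂ : AE14.pair H ζ = aeNorm ζ := by
    have hc : AE14.pair H ζ = AE14.pair (fun x => F₂ x - m₂) ζ := by
      refine AE14.pair_congr fun x hx => ?_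
      have hmem : x ∈ (ξ.support : Set X) ∪ (ζ.support : Set X) :=
        Or.inr (by exact_mod_cast hx)
      have hxS : x ∉ ξ.support := fun hc' => hdisj x hc' hx
      rw [← HEq hmem, hhdef]
      simp [hxS]
    rw [hc, AE14.pair_sub_const F₂ m₂ hζ, hF₂]
  linarith
end

section
/- Let G be a group acting by isometries on a metric space X with at least one unbounded orbit. Then for every element \xi of the Arens–Eells space of X, sup_{g \in G} \|\xi - \pi(g)\xi\|_{AE} = 2\|\xi\|_{AE}; in particular the only G-fixed vector of the induced action on the Arens–Eells space is 0. -/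
open Finsupp

namespace AE

variable {X : Type*} [MetricSpace X]

def decSet (ξ : X →₀ ℝ) : Set ℝ :=
  {c : ℝ | ∃ (n : ℕ) (a : Fin n → ℝ) (x y : Fin n → X),
    ξ = ∑ i, a i • (Finsupp.single (x i) (1 : ℝ) - Finsupp.single (y i) (1 : ℝ)) ∧
    c = ∑ i, |a i| * dist (x i) (y i)}

lemma aeNorm_def (ξ : X →₀ ℝ) : aeNorm ξ = sInf (decSet ξ) := rfl

lemma decSet_nonneg {ξ : X →₀ ℝ} {c : ℝ} (hc : c ∈ decSet ξ) : 0 ≤ c := by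
  obtain ⟨n, a, x, y, -, rfl⟩ := hc
  exact Finset.sum_nonneg fun i _ => mul_nonneg (abs_nonneg _) dist_nonneg

lemma bddBelow_decSet (ξ : X →₀ ℝ) : BddBelow (decSet ξ) :=
  ⟨0, fun c hc => decSet_nonneg hc⟩

lemma aeNorm_nonneg (ξ : X →₀ ℝ) : 0 ≤ aeNorm ξ :=
  Real.sInf_nonneg fun c hc => decSet_nonneg hc

noncomputable def tot : (X →₀ ℝ) →ₗ[ℝ] ℝ := Finsupp.linearCombination ℝ (fun _ : X => (1:ℝ))

lemma tot_eq_sum (ξ : X →₀ ℝ) : tot ξ = ξ.sum fun _ r => r := by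
  rw [tot, Finsupp.linearCombination_apply]
  exact Finsupp.sum_congr fun x _ => by simp

lemma tot_single (x : X) (r : ℝ) : tot (Finsupp.single x r) = r := by
  simp [tot, Finsupp.linearCombination_single]

lemma zero_mem_decSet : (0:ℝ) ∈ decSet (0 : X →₀ ℝ) :=
  ⟨0, Fin.elim0, Fin.elim0, Fin.elim0, by simp, by simp⟩

lemma aeNorm_zero : aeNorm (0 : X →₀ ℝ) = 0 :=
  le_antisymm (csInf_le (bddBelow_decSet _) zero_mem_decSet) (aeNorm_nonneg _)

lemma aeNorm_le_of_mem {ξ : X →₀ ℝ} {c : ℝ} (hc : c ∈ decSet ξ) : aeNorm ξ ≤ c :=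
  csInf_le (bddBelow_decSet ξ) hc

lemma exists_mem_decSet_lt {ξ : X →₀ ℝ} (hne : (decSet ξ).Nonempty) {ε : ℝ} (hε : 0 < ε) :
    ∃ c ∈ decSet ξ, c < aeNorm ξ + ε :=
  exists_lt_of_csInf_lt hne (by rw [aeNorm_def]; linarith)

lemma nonempty_decSet_aux : ∀ (N : ℕ) (ξ : X →₀ ℝ), ξ.support.card ≤ N →
    (ξ.sum fun _ r => r) = 0 → (decSet ξ).Nonempty := by
  classical
  intro N
  induction N with
  | zero =>
    intro ξ hcard _
    have hξ : ξ = 0 := by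
      rwa [Nat.le_zero, Finset.card_eq_zero, Finsupp.support_eq_empty] at hcard
    exact hξ ▸ ⟨0, zero_mem_decSet⟩
  | succ N ih =>
    intro ξ hcard hsum
    by_cases h0 : ξ = 0
    · exact h0 ▸ ⟨0, zero_mem_decSet⟩
    · obtain ⟨x, hx⟩ : ∃ x, x ∈ ξ.support := by
        rcases Finset.eq_empty_or_nonempty ξ.support with h | h
        · exact absurd (Finsupp.support_eq_empty.1 h) h0
        · exact h
      have hξx : ξ x ≠ 0 := Finsupp.mem_support_iff.1 hx
      have hy : ∃ y ∈ ξ.support, y ≠ x := by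
        by_contra h
        push_neg at h
        have hsub : ξ.support = {x} := by
          apply Finset.eq_singleton_iff_unique_mem.2
          exact ⟨hx, fun y hy => h y hy⟩
        have : (ξ.sum fun _ r => r) = ξ x := by
          rw [Finsupp.sum, hsub, Finset.sum_singleton]
        exact hξx (this ▸ hsum)
      obtain ⟨y, hy, hyx⟩ := hy
      set ξ' := ξ - ξ x • (Finsupp.single x (1:ℝ) - Finsupp.single y 1) with hξ'
      have hx'0 : ξ' x = 0 := by
        simp [hξ', Finsupp.single_apply, hyx]
      have hsupp' : ξ'.support ⊆ ξ.support.erase x := by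
        intro z hz
        rw [Finset.mem_erase]
        have hzx : z ≠ x := fun h => Finsupp.mem_support_iff.1 hz (h ▸ hx'0)
        refine ⟨hzx, ?_⟩
        by_cases hzy : z = y
        · exact hzy ▸ hy
        · have : ξ' z = ξ z := by
            simp [hξ', Finsupp.single_apply, Ne.symm hzx, Ne.symm hzy]
          exact Finsupp.mem_support_iff.2 (this ▸ Finsupp.mem_support_iff.1 hz)
      have hcard' : ξ'.support.card ≤ N := by
        have h1 : (ξ.support.erase x).card < ξ.support.card := Finset.card_erase_lt_of_mem hx
        have := Finset.card_le_card hsupp'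
        omega
      have hsum' : (ξ'.sum fun _ r => r) = 0 := by
        rw [← tot_eq_sum]
        rw [hξ', map_sub, map_smul, map_sub, tot_single, tot_single, tot_eq_sum, hsum]
        simp
      obtain ⟨c, n, a, p, q, hdec, hc⟩ := ih ξ' hcard' hsum'
      refine ⟨|ξ x| * dist x y + c,
        n+1, Fin.cons (ξ x) a, Fin.cons x p, Fin.cons y q, ?_, ?_⟩
      · rw [Fin.sum_univ_succ]
        simp only [Fin.cons_zero, Fin.cons_succ]
        rw [← hdec, hξ']
        abel
      · rw [Fin.sum_univ_succ]
        simp only [Fin.cons_zero, Fin.cons_succ]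
        rw [hc]

lemma nonempty_decSet {ξ : X →₀ ℝ} (h : (ξ.sum fun _ r => r) = 0) : (decSet ξ).Nonempty :=
  nonempty_decSet_aux ξ.support.card ξ le_rfl h


lemma add_mem_decSet {ξ ζ : X →₀ ℝ} {c d : ℝ} (hc : c ∈ decSet ξ) (hd : d ∈ decSet ζ) :
    c + d ∈ decSet (ξ + ζ) := by
  obtain ⟨n, a, x, y, hx, rfl⟩ := hc
  obtain ⟨m, b, p, q, hp, rfl⟩ := hd
  refine ⟨n + m, Fin.addCases a b, Fin.addCases x p, Fin.addCases y q, ?_, ?_⟩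
  · rw [Fin.sum_univ_add]
    simp only [Fin.addCases_left, Fin.addCases_right]
    rw [← hx, ← hp]
  · rw [Fin.sum_univ_add]
    simp only [Fin.addCases_left, Fin.addCases_right]

lemma smul_mem_decSet {ξ : X →₀ ℝ} {c : ℝ} (hc : c ∈ decSet ξ) (t : ℝ) :
    |t| * c ∈ decSet (t • ξ) := by
  obtain ⟨n, a, x, y, hx, rfl⟩ := hc
  refine ⟨n, fun i => t * a i, x, y, ?_, ?_⟩
  · rw [hx, Finset.smul_sum]
    exact Finset.sum_congr rfl fun i _ => smul_smul t (a i) _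
  · rw [Finset.mul_sum]
    exact Finset.sum_congr rfl fun i _ => by rw [abs_mul]; ring

lemma aeNorm_add_le {ξ ζ : X →₀ ℝ} (hξ : (decSet ξ).Nonempty) (hζ : (decSet ζ).Nonempty) :
    aeNorm (ξ + ζ) ≤ aeNorm ξ + aeNorm ζ := by
  refine le_of_forall_pos_le_add fun ε hε => ?_
  obtain ⟨c, hc, hclt⟩ := exists_mem_decSet_lt hξ (half_pos hε)
  obtain ⟨d, hd, hdlt⟩ := exists_mem_decSet_lt hζ (half_pos hε)
  have := aeNorm_le_of_mem (add_mem_decSet hc hd)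
  linarith

lemma aeNorm_smul_le {ξ : X →₀ ℝ} (hξ : (decSet ξ).Nonempty) (t : ℝ) :
    aeNorm (t • ξ) ≤ |t| * aeNorm ξ := by
  refine le_of_forall_pos_le_add fun ε hε => ?_
  have hδ : 0 < ε / (|t| + 1) := div_pos hε (by positivity)
  obtain ⟨c, hc, hclt⟩ := exists_mem_decSet_lt hξ hδ
  have h1 := aeNorm_le_of_mem (smul_mem_decSet hc t)
  have h2 : |t| * c ≤ |t| * (aeNorm ξ + ε / (|t|+1)) :=
    mul_le_mul_of_nonneg_left hclt.le (abs_nonneg t)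
  have h3 : |t| * (ε / (|t|+1)) ≤ ε := by
    rw [mul_comm, div_mul_eq_mul_div, div_le_iff₀ (by positivity : (0:ℝ) < |t|+1)]
    nlinarith [abs_nonneg t]
  nlinarith [abs_nonneg t]

lemma aeNorm_smul {ξ : X →₀ ℝ} (h : (ξ.sum fun _ r => r) = 0) {t : ℝ} (ht : t ≠ 0) :
    aeNorm (t • ξ) = |t| * aeNorm ξ := by
  have hne := nonempty_decSet h
  refine le_antisymm (aeNorm_smul_le hne t) ?_
  have hsum' : ((t • ξ).sum fun _ r => r) = 0 := by
    rw [← tot_eq_sum, map_smul, tot_eq_sum, h, smul_zero]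
  have h2 := aeNorm_smul_le (nonempty_decSet hsum') t⁻¹
  rw [inv_smul_smul₀ ht] at h2
  have h3 : |t| * aeNorm ξ ≤ |t| * (|t⁻¹| * aeNorm (t • ξ)) :=
    mul_le_mul_of_nonneg_left h2 (abs_nonneg t)
  rwa [abs_inv, ← mul_assoc, mul_inv_cancel₀ (abs_ne_zero.2 ht), one_mul] at h3

noncomputable def pr (h : X → ℝ) : (X →₀ ℝ) →ₗ[ℝ] ℝ := Finsupp.linearCombination ℝ h

lemma pr_single (h : X → ℝ) (x : X) (r : ℝ) : pr h (Finsupp.single x r) = r * h x := by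
  simp [pr, Finsupp.linearCombination_single]

lemma pr_decomp (h : X → ℝ) {n : ℕ} (a : Fin n → ℝ) (x y : Fin n → X) :
    pr h (∑ i, a i • (Finsupp.single (x i) (1:ℝ) - Finsupp.single (y i) 1)) =
      ∑ i, a i * (h (x i) - h (y i)) := by
  rw [map_sum]
  refine Finset.sum_congr rfl fun i _ => ?_
  rw [map_smul, map_sub, smul_eq_mul]
  rw [pr_single, pr_single, one_mul, one_mul]

lemma pr_le_of_mem {h : X → ℝ} {L : ℝ} (hL : ∀ z w, |h z - h w| ≤ L * dist z w)
    {ξ : X →₀ ℝ} {c : ℝ} (hc : c ∈ decSet ξ) : pr h ξ ≤ L * c := by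
  obtain ⟨n, a, x, y, hx, rfl⟩ := hc
  rw [hx, pr_decomp, Finset.mul_sum]
  refine Finset.sum_le_sum fun i _ => ?_
  calc a i * (h (x i) - h (y i)) ≤ |a i * (h (x i) - h (y i))| := le_abs_self _
    _ = |a i| * |h (x i) - h (y i)| := abs_mul _ _
    _ ≤ |a i| * (L * dist (x i) (y i)) := mul_le_mul_of_nonneg_left (hL _ _) (abs_nonneg _)
    _ = L * (|a i| * dist (x i) (y i)) := by ring

lemma pr_le_aeNorm {h : X → ℝ} {L : ℝ} (hL0 : 0 ≤ L) (hL : ∀ z w, |h z - h w| ≤ L * dist z w)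
    {ξ : X →₀ ℝ} (hne : (decSet ξ).Nonempty) : pr h ξ ≤ L * aeNorm ξ := by
  refine le_of_forall_pos_le_add fun ε hε => ?_
  have hδ : 0 < ε / (L + 1) := by positivity
  obtain ⟨c, hc, hclt⟩ := exists_mem_decSet_lt hne hδ
  have h1 := pr_le_of_mem hL hc
  have h2 : L * c ≤ L * (aeNorm ξ + ε / (L+1)) := mul_le_mul_of_nonneg_left hclt.le hL0
  have h3 : L * (ε / (L+1)) ≤ ε := by
    rw [mul_comm, div_mul_eq_mul_div, div_le_iff₀ (by positivity : (0:ℝ) < L+1)]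
    nlinarith
  nlinarith

lemma aeNorm_mapDomain_le (σ : X → X) (hσ : ∀ z w, dist (σ z) (σ w) ≤ dist z w)
    {ξ : X →₀ ℝ} (hne : (decSet ξ).Nonempty) :
    aeNorm (Finsupp.mapDomain σ ξ) ≤ aeNorm ξ := by
  refine le_of_forall_pos_le_add fun ε hε => ?_
  obtain ⟨c, ⟨n, a, x, y, hx, rfl⟩, hclt⟩ := exists_mem_decSet_lt hne hε
  have hmap : Finsupp.mapDomain σ ξ =
      ∑ i, a i • (Finsupp.single (σ (x i)) (1:ℝ) - Finsupp.single (σ (y i)) 1) := by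
    have : Finsupp.mapDomain σ ξ = Finsupp.lmapDomain ℝ ℝ σ ξ := rfl
    rw [this, hx, map_sum]
    refine Finset.sum_congr rfl fun i _ => ?_
    rw [map_smul, map_sub]
    simp [Finsupp.lmapDomain_apply, Finsupp.mapDomain_single]
  have hmem := aeNorm_le_of_mem ⟨n, a, σ ∘ x, σ ∘ y, hmap, rfl⟩
  have hle : (∑ i, |a i| * dist (σ (x i)) (σ (y i))) ≤ ∑ i, |a i| * dist (x i) (y i) :=
    Finset.sum_le_sum fun i _ => mul_le_mul_of_nonneg_left (hσ _ _) (abs_nonneg _)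
  calc aeNorm (Finsupp.mapDomain σ ξ) ≤ _ := hmem
    _ ≤ _ := hle
    _ ≤ aeNorm ξ + ε := hclt.le

lemma sum_mapDomain (σ : X → X) (ξ : X →₀ ℝ) :
    ((Finsupp.mapDomain σ ξ).sum fun _ r => r) = ξ.sum fun _ r => r :=
  Finsupp.sum_mapDomain_index (fun _ => rfl) (fun _ _ _ => rfl)

lemma single_pair_mem {z w : X} :
    dist z w ∈ decSet (Finsupp.single z (1:ℝ) - Finsupp.single w 1) := by
  refine ⟨1, fun _ => 1, fun _ => z, fun _ => w, ?_, ?_⟩ <;>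
    simp [Fin.sum_univ_one]

lemma pr_sub_const (h : X → ℝ) (c : ℝ) (ξ : X →₀ ℝ) :
    pr (fun z => h z - c) ξ = pr h ξ - c * (ξ.sum fun _ r => r) := by
  simp only [pr, Finsupp.linearCombination_apply, smul_eq_mul]
  rw [show (ξ.sum fun z r => r * (h z - c)) = ξ.sum fun z r => r * h z - r * c by
    exact Finsupp.sum_congr fun z _ => by ring]
  rw [Finsupp.sum_sub]
  congr 1
  rw [mul_comm, ← Finsupp.sum_mul]

lemma exists_dual (x₀ : X) {ξ : X →₀ ℝ} (hsum : (ξ.sum fun _ r => r) = 0) :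
    ∃ f : X → ℝ, f x₀ = 0 ∧ (∀ z w, |f z - f w| ≤ dist z w) ∧ pr f ξ = aeNorm ξ := by
  by_cases hξ0 : ξ = 0
  · subst hξ0
    exact ⟨fun _ => 0, rfl, fun z w => by simpa using dist_nonneg, by
      rw [map_zero, aeNorm_zero]⟩
  · set N : (X →₀ ℝ) → ℝ := fun η => aeNorm (η - (tot η) • Finsupp.single x₀ 1) with hN
    have hPsum : ∀ η : X →₀ ℝ, ((η - tot η • Finsupp.single x₀ (1:ℝ)).sum fun _ r => r) = 0 := by
      intro η
      rw [← tot_eq_sum, map_sub, map_smul, tot_single, smul_eq_mul, mul_one, sub_self]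
    have hNid : ∀ η : X →₀ ℝ, (η.sum fun _ r => r) = 0 → N η = aeNorm η := by
      intro η hη
      simp only [hN]
      rw [tot_eq_sum, hη, zero_smul, sub_zero]
    have N_hom : ∀ c : ℝ, 0 < c → ∀ η, N (c • η) = c * N η := by
      intro c hc η
      have : c • η - tot (c • η) • Finsupp.single x₀ (1:ℝ) =
          c • (η - tot η • Finsupp.single x₀ 1) := by
        rw [map_smul, smul_eq_mul, smul_sub, smul_smul]
      rw [hN]
      simp only
      rw [this, aeNorm_smul (hPsum η) (ne_of_gt hc), abs_of_pos hc]
    have N_add : ∀ η θ, N (η + θ) ≤ N η + N θ := by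
      intro η θ
      have : (η + θ) - tot (η + θ) • Finsupp.single x₀ (1:ℝ) =
          (η - tot η • Finsupp.single x₀ 1) + (θ - tot θ • Finsupp.single x₀ 1) := by
        rw [map_add, add_smul]; abel
      rw [hN]
      simp only
      rw [this]
      exact aeNorm_add_le (nonempty_decSet (hPsum η)) (nonempty_decSet (hPsum θ))
    set f₀ : (X →₀ ℝ) →ₗ.[ℝ] ℝ := LinearPMap.mkSpanSingleton ξ (aeNorm ξ) hξ0 with hf₀
    have hf : ∀ v : f₀.domain, f₀ v ≤ N v.1 := by
      rintro ⟨v, hv⟩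
      obtain ⟨c, rfl⟩ := Submodule.mem_span_singleton.1 hv
      have happ : f₀ ⟨c • ξ, hv⟩ = c • aeNorm ξ :=
        LinearPMap.mkSpanSingleton'_apply _ _ _ c hv
      rw [happ]
      show c • aeNorm ξ ≤ N (c • ξ)
      have hNv : N (c • ξ) = |c| * aeNorm ξ := by
        rcases eq_or_ne c 0 with rfl | hc
        · rw [zero_smul, hNid 0 (by simp), aeNorm_zero, abs_zero, zero_mul]
        · rw [hNid _ (by rw [← tot_eq_sum, map_smul, tot_eq_sum, hsum, smul_zero]),
            aeNorm_smul hsum hc]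
      rw [hNv, smul_eq_mul]
      exact mul_le_mul_of_nonneg_right (le_abs_self c) (aeNorm_nonneg ξ)
    obtain ⟨φ, hφ1, hφ2⟩ := exists_extension_of_le_sublinear f₀ N N_hom N_add hf
    have hφξ : φ ξ = aeNorm ξ := by
      have h := hφ1 ⟨ξ, Submodule.mem_span_singleton_self ξ⟩
      have h2 : f₀ ⟨ξ, Submodule.mem_span_singleton_self ξ⟩ = aeNorm ξ :=
        LinearPMap.mkSpanSingleton_apply ℝ ℝ hξ0 (aeNorm ξ)
      exact h.trans h2
    have hφpair : ∀ z w : X, φ (Finsupp.single z 1 - Finsupp.single w 1) ≤ dist z w := by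
      intro z w
      refine (hφ2 _).trans ?_
      rw [hNid _ (by rw [← tot_eq_sum, map_sub, tot_single, tot_single, sub_self])]
      exact aeNorm_le_of_mem single_pair_mem
    set f : X → ℝ := fun z => φ (Finsupp.single z 1) - φ (Finsupp.single x₀ 1) with hfdef
    have hflip : ∀ z w, |f z - f w| ≤ dist z w := by
      intro z w
      have h1 := hφpair z w
      have h2 := hφpair w z
      rw [map_sub] at h1 h2
      rw [abs_le]
      constructor
      · rw [dist_comm w z] at h2
        simp only [hfdef]
        linarith
      · simp only [hfdef]
        linarith
    have hprf : pr f ξ = aeNorm ξ := by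
      have key : pr (fun z => φ (Finsupp.single z 1)) = φ := by
        refine Finsupp.lhom_ext fun a b => ?_
        rw [pr_single]
        rw [show Finsupp.single a b = b • Finsupp.single a (1:ℝ) by
          rw [Finsupp.smul_single', mul_one], map_smul, smul_eq_mul]
      have := pr_sub_const (fun z => φ (Finsupp.single z 1)) (φ (Finsupp.single x₀ 1)) ξ
      rw [hsum, mul_zero, sub_zero, key] at this
      rw [hfdef]
      rw [this, hφξ]
    exact ⟨f, by simp [hfdef], hflip, hprf⟩

lemma eq_zero_of_aeNorm_eq_zero {ξ : X →₀ ℝ} (hsum : (ξ.sum fun _ r => r) = 0)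
    (h0 : aeNorm ξ = 0) : ξ = 0 := by
  classical
  by_contra hne0
  obtain ⟨x, hx⟩ : ∃ x, x ∈ ξ.support := by
    rcases Finset.eq_empty_or_nonempty ξ.support with h | h
    · exact absurd (Finsupp.support_eq_empty.1 h) hne0
    · exact h
  have hξx : ξ x ≠ 0 := Finsupp.mem_support_iff.1 hx
  set A := ξ.support.erase x with hA
  by_cases hAne : A.Nonempty
  case neg =>
    -- support = {x}, contradicts sum = 0
    have hsub : ξ.support = {x} := by
      apply Finset.eq_singleton_iff_unique_mem.2
      refine ⟨hx, fun y hy => ?_⟩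
      by_contra hyx
      exact hAne ⟨y, Finset.mem_erase.2 ⟨hyx, hy⟩⟩
    have : (ξ.sum fun _ r => r) = ξ x := by
      rw [Finsupp.sum, hsub, Finset.sum_singleton]
    exact hξx (this ▸ hsum)
  case pos =>
    set r : ℝ := min 1 (A.inf' hAne fun z => dist x z) with hr
    have hr0 : 0 < r := by
      rw [hr]
      refine lt_min one_pos ?_
      rw [Finset.lt_inf'_iff]
      intro z hz
      have hzx : z ≠ x := (Finset.mem_erase.1 hz).1
      exact dist_pos.2 (Ne.symm hzx)
    have hrz : ∀ z ∈ ξ.support, z ≠ x → r ≤ dist x z := by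
      intro z hz hzx
      have hzA : z ∈ A := Finset.mem_erase.2 ⟨hzx, hz⟩
      exact (min_le_right _ _).trans (Finset.inf'_le _ hzA)
    set f : X → ℝ := fun z => max 0 (r - dist x z) with hf
    have hflip : ∀ z w, |f z - f w| ≤ 1 * dist z w := by
      intro z w
      rw [one_mul, hf]
      refine (abs_max_sub_max_le_max _ _ _ _).trans (max_le ?_ ?_)
      · simpa using dist_nonneg
      · have : (r - dist x z) - (r - dist x w) = dist x w - dist x z := by ring
        rw [this, dist_comm x w, dist_comm x z, dist_comm z w]
        exact abs_dist_sub_le w z x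
    have hfx : f x = r := by
      simp [hf, dist_self, hr0.le]
    have hprf : pr f ξ = ξ x * r := by
      rw [pr, Finsupp.linearCombination_apply, Finsupp.sum]
      rw [Finset.sum_eq_single x]
      · rw [hfx, smul_eq_mul]
      · intro z hz hzx
        have : f z = 0 := by
          rw [hf]
          simp only
          rw [max_eq_left]
          have := hrz z hz (hzx)
          rw [dist_comm] at this
          rw [dist_comm]
          linarith
        rw [this, smul_zero]
      · intro hx'
        exact absurd hx hx'
    have hne := nonempty_decSet hsum
    have h1 : pr f ξ ≤ 0 := by
      have := pr_le_aeNorm zero_le_one hflip hne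
      rwa [h0, mul_zero] at this
    have h2 : pr (fun z => - f z) ξ ≤ 0 := by
      have hlip2 : ∀ z w, |(fun z => - f z) z - (fun z => - f z) w| ≤ 1 * dist z w := by
        intro z w
        simp only
        rw [show -f z - -f w = -(f z - f w) by ring, abs_neg]
        exact hflip z w
      have := pr_le_aeNorm zero_le_one hlip2 hne
      rwa [h0, mul_zero] at this
    have hneg : pr (fun z => - f z) ξ = - pr f ξ := by
      simp only [pr, Finsupp.linearCombination_apply, smul_eq_mul, Finsupp.sum]
      rw [← Finset.sum_neg_distrib]
      exact Finset.sum_congr rfl fun z _ => by ring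
    rw [hneg] at h2
    have : pr f ξ = 0 := le_antisymm h1 (by linarith)
    rw [hprf] at this
    rcases mul_eq_zero.1 this with h | h
    · exact hξx h
    · exact (ne_of_gt hr0) h
end AE
theorem stmt15 {G X : Type*} [Group G] [MetricSpace X] [MulAction G X]
    (hiso : ∀ g : G, Isometry (fun x : X => g • x))
    (hunb : ∃ x : X, ¬ Bornology.IsBounded (Set.range fun g : G => g • x)) :
    ∀ ξ : X →₀ ℝ, (ξ.sum fun _ r => r) = 0 →
      (⨆ g : G, aeNorm (ξ - Finsupp.mapDomain (fun z : X => g • z) ξ)) =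
          2 * aeNorm ξ ∧
      ((∀ g : G, Finsupp.mapDomain (fun z : X => g • z) ξ = ξ) → ξ = 0) := by
  classical
  intro ξ hsum
  obtain ⟨x₀, hx₀⟩ := hunb
  have hdist : ∀ (g : G) (z w : X), dist (g • z) (g • w) = dist z w := fun g z w =>
    (hiso g).dist_eq z w
  have hsum_g : ∀ g : G, ((Finsupp.mapDomain (fun z : X => g • z) ξ).sum fun _ r => r) = 0 :=
    fun g => (AE.sum_mapDomain _ ξ).trans hsum
  have hsum_sub : ∀ g : G,
      ((ξ - Finsupp.mapDomain (fun z : X => g • z) ξ).sum fun _ r => r) = 0 := by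
    intro g
    rw [← AE.tot_eq_sum, map_sub, AE.tot_eq_sum, AE.tot_eq_sum, hsum, hsum_g, sub_zero]
  have hnorm_g : ∀ g : G, aeNorm (Finsupp.mapDomain (fun z : X => g • z) ξ) = aeNorm ξ := by
    intro g
    have h1 := AE.aeNorm_mapDomain_le (fun z => g • z) (fun z w => (hdist g z w).le)
      (AE.nonempty_decSet hsum)
    have h2 := AE.aeNorm_mapDomain_le (fun z => g⁻¹ • z) (fun z w => (hdist g⁻¹ z w).le)
      (AE.nonempty_decSet (hsum_g g))
    have hcomp : Finsupp.mapDomain (fun z : X => g⁻¹ • z)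
        (Finsupp.mapDomain (fun z : X => g • z) ξ) = ξ := by
      rw [← Finsupp.mapDomain_comp]
      have he : ((fun z : X => g⁻¹ • z) ∘ fun z : X => g • z) = id :=
        funext fun z => inv_smul_smul g z
      rw [he, Finsupp.mapDomain_id]
    rw [hcomp] at h2
    exact le_antisymm h1 h2
  have hub : ∀ g : G, aeNorm (ξ - Finsupp.mapDomain (fun z : X => g • z) ξ) ≤ 2 * aeNorm ξ := by
    intro g
    have hnegsum : ((-(Finsupp.mapDomain (fun z : X => g • z) ξ)).sum fun _ r => r) = 0 := by
      rw [← AE.tot_eq_sum, map_neg, AE.tot_eq_sum, hsum_g, neg_zero]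
    have hneg : aeNorm (-(Finsupp.mapDomain (fun z : X => g • z) ξ)) = aeNorm ξ := by
      have h1 := AE.aeNorm_smul (hsum_g g) (t := (-1:ℝ)) (by norm_num)
      rw [neg_one_smul] at h1
      rw [h1, hnorm_g g]
      norm_num
    have h2 := AE.aeNorm_add_le (AE.nonempty_decSet hsum) (AE.nonempty_decSet hnegsum)
    rw [hneg] at h2
    rw [sub_eq_add_neg]
    linarith
  have ha0 : 0 ≤ aeNorm ξ := AE.aeNorm_nonneg ξ
  have hlb : ∀ ε : ℝ, 0 < ε → ∃ g : G,
      2 * aeNorm ξ - ε ≤ aeNorm (ξ - Finsupp.mapDomain (fun z : X => g • z) ξ) := by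
    intro ε hε
    obtain ⟨f, hfx₀, hflip, hfpr⟩ := AE.exists_dual x₀ hsum
    obtain ⟨D, hD1, hD⟩ : ∃ D : ℝ, 1 ≤ D ∧ ∀ z ∈ ξ.support, dist z x₀ ≤ D := by
      obtain ⟨D₀, hD₀⟩ := (ξ.support.finite_toSet.isBounded).subset_closedBall x₀
      refine ⟨max 1 D₀, le_max_left _ _, fun z hz => ?_⟩
      have hmem := hD₀ (Finset.mem_coe.2 hz)
      rw [Metric.mem_closedBall] at hmem
      exact hmem.trans (le_max_right _ _)
    have hD0 : (0:ℝ) < D := lt_of_lt_of_le one_pos hD1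
    set K : ℝ := 2 * aeNorm ξ + 1 with hK
    have hK0 : 0 < K := by positivity
    set lam : ℝ := ε / K with hlam
    have hlam0 : 0 < lam := div_pos hε hK0
    set R : ℝ := 2*D + 2*D/lam with hR
    obtain ⟨g, hg⟩ : ∃ g : G, R < dist (g • x₀) x₀ := by
      by_contra hcon
      push_neg at hcon
      refine hx₀ ((Metric.isBounded_closedBall (x := x₀) (r := R)).subset ?_)
      rintro _ ⟨g, rfl⟩
      exact Metric.mem_closedBall.2 (hcon g)
    have hRlam : lam * (R - 2*D) = 2*D := by
      rw [hR]
      field_simp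
      ring
    set F1 : X → ℝ := fun z => max (-D) (min D (f z)) with hF1
    set F2 : X → ℝ := fun z => max (-D) (min D (- f (g⁻¹ • z))) with hF2
    set u : X → ℝ := fun z => max (F1 z - lam * dist z x₀) (F2 z - lam * dist z (g • x₀))
      with hu
    have clamp_lip : ∀ (v : X → ℝ), (∀ z w, |v z - v w| ≤ dist z w) →
        ∀ z w, |max (-D) (min D (v z)) - max (-D) (min D (v w))| ≤ dist z w := by
      intro v hv z w
      refine (abs_max_sub_max_le_max _ _ _ _).trans (max_le ?_ ?_)
      · simpa using dist_nonneg
      · refine (abs_min_sub_min_le_max _ _ _ _).trans (max_le ?_ (hv z w))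
        simpa using dist_nonneg
    have hF1lip : ∀ z w, |F1 z - F1 w| ≤ dist z w := clamp_lip f hflip
    have hF2lip : ∀ z w, |F2 z - F2 w| ≤ dist z w := by
      refine clamp_lip _ (fun z w => ?_)
      have h1 := hflip (g⁻¹ • z) (g⁻¹ • w)
      rw [show - f (g⁻¹ • z) - - f (g⁻¹ • w) = -(f (g⁻¹ • z) - f (g⁻¹ • w)) by ring, abs_neg]
      calc |f (g⁻¹ • z) - f (g⁻¹ • w)| ≤ dist (g⁻¹ • z) (g⁻¹ • w) := h1
        _ = dist z w := hdist g⁻¹ z w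
    have hulip : ∀ z w, |u z - u w| ≤ (1 + lam) * dist z w := by
      intro z w
      have key : ∀ (F : X → ℝ) (p : X), (∀ z w, |F z - F w| ≤ dist z w) →
          |(F z - lam * dist z p) - (F w - lam * dist w p)| ≤ (1 + lam) * dist z w := by
        intro F p hF
        have e : (F z - lam * dist z p) - (F w - lam * dist w p)
            = (F z - F w) + (-(lam * (dist z p - dist w p))) := by ring
        rw [e]
        refine (abs_add_le _ _).trans ?_
        rw [abs_neg, abs_mul, abs_of_pos hlam0]
        have h1 := hF z w
        have h2 : |dist z p - dist w p| ≤ dist z w := abs_dist_sub_le z w p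
        nlinarith
      simp only [hu]
      refine (abs_max_sub_max_le_max _ _ _ _).trans (max_le ?_ ?_)
      · exact key F1 x₀ hF1lip
      · exact key F2 (g • x₀) hF2lip
    have hfbd : ∀ z : X, dist z x₀ ≤ D → |f z| ≤ D := by
      intro z hz
      have h1 := hflip z x₀
      rw [hfx₀, sub_zero] at h1
      exact h1.trans hz
    have hball1 : ∀ z : X, dist z x₀ ≤ D → u z = f z - lam * dist z x₀ := by
      intro z hz
      have hfz := hfbd z hz
      have hF1z : F1 z = f z := by
        simp only [hF1]
        rw [min_eq_right (abs_le.1 hfz).2, max_eq_right (abs_le.1 hfz).1]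
      have hF2z : F2 z ≤ D := by
        simp only [hF2]
        exact max_le (by linarith) (min_le_left _ _)
      have hd2 : R - D ≤ dist z (g • x₀) := by
        have htri := dist_triangle x₀ z (g • x₀)
        rw [dist_comm x₀ z, dist_comm x₀ (g • x₀)] at htri
        linarith [hg]
      have hbr : F2 z - lam * dist z (g • x₀) ≤ F1 z - lam * dist z x₀ := by
        have l1 : lam * (R - D) ≤ lam * dist z (g • x₀) :=
          mul_le_mul_of_nonneg_left hd2 hlam0.le
        have l2 : -D ≤ F1 z := le_max_left _ _
        have l3 : lam * dist z x₀ ≤ lam * D := mul_le_mul_of_nonneg_left hz hlam0.le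
        nlinarith [hRlam]
      simp only [hu]
      rw [max_eq_left hbr, hF1z]
    have hball2 : ∀ z : X, dist z (g • x₀) ≤ D →
        u z = - f (g⁻¹ • z) - lam * dist z (g • x₀) := by
      intro z hz
      have hfz : |f (g⁻¹ • z)| ≤ D := by
        apply hfbd
        have he : dist (g⁻¹ • z) x₀ = dist z (g • x₀) := by
          rw [← hdist g (g⁻¹ • z) x₀, smul_inv_smul]
        rw [he]
        exact hz
      have hF2z : F2 z = - f (g⁻¹ • z) := by
        simp only [hF2]
        rw [min_eq_right (by linarith [(abs_le.1 hfz).1]),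
          max_eq_right (by linarith [(abs_le.1 hfz).2])]
      have hF1z : F1 z ≤ D := by
        simp only [hF1]
        exact max_le (by linarith) (min_le_left _ _)
      have hd2 : R - D ≤ dist z x₀ := by
        have htri := dist_triangle (g • x₀) z x₀
        have he : dist (g • x₀) z = dist z (g • x₀) := dist_comm _ _
        linarith [hg]
      have hbr : F1 z - lam * dist z x₀ ≤ F2 z - lam * dist z (g • x₀) := by
        have l1 : lam * (R - D) ≤ lam * dist z x₀ :=
          mul_le_mul_of_nonneg_left hd2 hlam0.le
        have l2 : -D ≤ F2 z := le_max_left _ _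
        have l3 : lam * dist z (g • x₀) ≤ lam * D := mul_le_mul_of_nonneg_left hz hlam0.le
        nlinarith [hRlam]
      simp only [hu]
      rw [max_eq_right hbr, hF2z]
    refine ⟨g, ?_⟩
    set η := Finsupp.mapDomain (fun z : X => g • z) ξ with hη
    have hprξ : AE.pr u ξ = AE.pr f ξ - lam * (ξ.sum fun z r => r * dist z x₀) := by
      have e1 : AE.pr u ξ = ξ.sum fun z r => r * (f z - lam * dist z x₀) := by
        rw [AE.pr, Finsupp.linearCombination_apply]
        refine Finsupp.sum_congr fun z hz => ?_
        rw [smul_eq_mul, hball1 z (hD z hz)]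
      rw [e1, AE.pr, Finsupp.linearCombination_apply]
      simp only [Finsupp.sum, smul_eq_mul]
      rw [Finset.mul_sum, ← Finset.sum_sub_distrib]
      exact Finset.sum_congr rfl fun z _ => by ring
    have hprη : AE.pr u η = - AE.pr f ξ - lam * (ξ.sum fun z r => r * dist z x₀) := by
      have e1 : AE.pr u η = ξ.sum fun z r => r * u (g • z) := by
        rw [AE.pr, Finsupp.linearCombination_apply, hη]
        rw [Finsupp.sum_mapDomain_index (fun b => by simp)
          (fun b m₁ m₂ => by rw [add_smul])]
        exact Finsupp.sum_congr fun z _ => by rw [smul_eq_mul]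
      have e2 : ∀ z ∈ ξ.support, u (g • z) = - f z - lam * dist z x₀ := by
        intro z hz
        have hdz : dist (g • z) (g • x₀) ≤ D := by
          rw [hdist]
          exact hD z hz
        rw [hball2 _ hdz, inv_smul_smul, hdist]
      have e3 : AE.pr u η = ξ.sum fun z r => r * (- f z - lam * dist z x₀) := by
        rw [e1]
        refine Finsupp.sum_congr fun z hz => ?_
        rw [e2 z hz]
      rw [e3, AE.pr, Finsupp.linearCombination_apply]
      simp only [Finsupp.sum, smul_eq_mul]
      rw [Finset.mul_sum, ← Finset.sum_neg_distrib, ← Finset.sum_sub_distrib]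
      exact Finset.sum_congr rfl fun z _ => by ring
    have hprζ : AE.pr u (ξ - η) = 2 * aeNorm ξ := by
      rw [map_sub, hprξ, hprη, hfpr]
      ring
    have hbound := AE.pr_le_aeNorm (L := 1 + lam) (by linarith) hulip
      (AE.nonempty_decSet (hsum_sub g))
    rw [hprζ] at hbound
    have hn0 := AE.aeNorm_nonneg (ξ - η)
    have hub' := hub g
    rw [← hη] at hub'
    have hεeq : ε = 2 * aeNorm ξ * lam + lam := by
      rw [hlam, hK]
      field_simp
    have hprod : lam * aeNorm (ξ - η) ≤ lam * (2 * aeNorm ξ) :=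
      mul_le_mul_of_nonneg_left hub' hlam0.le
    nlinarith [hbound, hn0, hprod, hεeq]
  have hG : Nonempty G := ⟨1⟩
  have hbdd : BddAbove (Set.range fun g : G =>
      aeNorm (ξ - Finsupp.mapDomain (fun z : X => g • z) ξ)) := by
    refine ⟨2 * aeNorm ξ, ?_⟩
    rintro _ ⟨g, rfl⟩
    exact hub g
  have hmain : (⨆ g : G, aeNorm (ξ - Finsupp.mapDomain (fun z : X => g • z) ξ))
      = 2 * aeNorm ξ := by
    refine le_antisymm (ciSup_le hub) ?_
    refine le_of_forall_pos_le_add fun ε hε => ?_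
    obtain ⟨g, hg⟩ := hlb ε hε
    have h1 := le_ciSup hbdd g
    linarith
  refine ⟨hmain, ?_⟩
  intro hfix
  have hz : ∀ g : G, aeNorm (ξ - Finsupp.mapDomain (fun z : X => g • z) ξ) = 0 := by
    intro g
    rw [hfix g, sub_self, AE.aeNorm_zero]
  have h0 : (⨆ g : G, aeNorm (ξ - Finsupp.mapDomain (fun z : X => g • z) ξ)) = 0 := by
    simp only [hz]
    exact ciSup_const
  rw [h0] at hmain
  have hA : aeNorm ξ = 0 := by linarith
  exact AE.eq_zero_of_aeNorm_eq_zero hsum hA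
end
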